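/- arXiv:1609.00066 — 5 statements merged into one kernel-verified Lean document; each statement's English description precedes it below -/
import Mathlib

section
/- The negative binomial PMF converges pointwise to the Poisson PMF as r → ∞ with mean held fixed: for fixed μ > 0 and each x ∈ ℕ, setting p = r/(r+μ), the negative binomial PMF Γ(r+x)/(Γ(r)Γ(x+1)) p^r (1−p)^x converges to μ^x e^{−μ}/x! as r → ∞. -/
open scoped Nat
open Real Filter Topology

/-!
Writing `Γ(r + x) = Γ(r) · r (r + 1) ⋯ (r + x - 1)` and `1 - r/(r + μ) = μ/(r + μ)`, the PMF becomes
`(∏_{i < x} (r + i)/(r + μ)) · (r/(r + μ))^r · μ^x / x!`. Each of the `x` ratios tends to `1`, and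
`(r/(r + μ))^r = ((1 + μ/r)^r)⁻¹ → e^{-μ}`.
-/

theorem Real.Gamma_add_nat_eq_mul_prod {r : ℝ} (hr : ∀ k : ℕ, r ≠ -k) (n : ℕ) :
    Gamma (r + n) = Gamma r * ∏ i ∈ Finset.range n, (r + i) := by
  induction n with
  | zero => simp
  | succ n ih =>
    have hrn : r + n ≠ 0 := fun h ↦ hr n (eq_neg_of_add_eq_zero_left h)
    rw [Nat.cast_succ, ← add_assoc, Gamma_add_one hrn, ih, Finset.prod_range_succ]
    ring

theorem tendsto_add_div_add_atTop (a b : ℝ) :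
    Tendsto (fun r : ℝ ↦ (r + a) / (r + b)) atTop (𝓝 1) := by
  have h : Tendsto (fun r : ℝ ↦ 1 + (a - b) / (r + b)) atTop (𝓝 (1 + 0)) :=
    tendsto_const_nhds.add <| tendsto_const_nhds.div_atTop <|
      tendsto_atTop_add_const_right _ b tendsto_id
  rw [add_zero] at h
  refine h.congr' ?_
  filter_upwards [eventually_gt_atTop (-b)] with r hr
  have : r + b ≠ 0 := by linarith
  field_simp
  ring

theorem tendsto_div_add_rpow_atTop (μ : ℝ) :
    Tendsto (fun r : ℝ ↦ (r / (r + μ)) ^ r) atTop (𝓝 (exp (-μ))) := by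
  have h := (tendsto_one_add_div_rpow_exp μ).inv₀ (exp_ne_zero μ)
  rw [← exp_neg] at h
  refine h.congr' ?_
  filter_upwards [eventually_gt_atTop 0, eventually_gt_atTop (-μ)] with r hr hrμ
  have hsum : 1 + μ / r = (r + μ) / r := by field_simp
  rw [hsum, ← inv_rpow (div_nonneg (by linarith) hr.le), inv_div]

theorem negBinomial_pmf_eq_prod_mul {r μ : ℝ} (hr : 0 < r) (hrμ : r + μ ≠ 0) (x : ℕ) :
    Gamma (r + x) / (Gamma r * Gamma ((x : ℝ) + 1)) * (r / (r + μ)) ^ r * (1 - r / (r + μ)) ^ x =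
      (∏ i ∈ Finset.range x, (r + i) / (r + μ)) * (r / (r + μ)) ^ r * μ ^ x / x ! := by
  have hr' : ∀ k : ℕ, r ≠ -k := fun k h ↦ by linarith [h ▸ hr, k.cast_nonneg (α := ℝ)]
  have hΓ : Gamma r ≠ 0 := (Gamma_pos_of_pos hr).ne'
  have hq : 1 - r / (r + μ) = μ / (r + μ) := by field_simp; ring
  rw [Gamma_add_nat_eq_mul_prod hr', Gamma_nat_eq_factorial, hq, div_pow,
    Finset.prod_div_distrib, Finset.prod_const, Finset.card_range]
  field_simp

theorem negBinomial_tendsto_poisson_general (μ : ℝ) (x : ℕ) :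
    Tendsto
      (fun r : ℝ ↦
        Real.Gamma (r + x) / (Real.Gamma r * Real.Gamma ((x : ℝ) + 1)) *
          (r / (r + μ)) ^ r * (1 - r / (r + μ)) ^ x)
      atTop (𝓝 (μ ^ x * Real.exp (-μ) / x !)) := by
  have hprod : Tendsto (fun r : ℝ ↦ ∏ i ∈ Finset.range x, (r + i) / (r + μ)) atTop (𝓝 1) := by
    simpa using tendsto_finsetProd (Finset.range x) fun i _ ↦ tendsto_add_div_add_atTop (i : ℝ) μ
  have hlim := ((hprod.mul (tendsto_div_add_rpow_atTop μ)).mul_const (μ ^ x)).div_const (x ! : ℝ)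
  rw [one_mul, mul_comm (exp _)] at hlim
  refine hlim.congr' ?_
  filter_upwards [eventually_gt_atTop 0, eventually_gt_atTop (-μ)] with r hr hrμ
  exact (negBinomial_pmf_eq_prod_mul hr (by linarith) x).symm

/-- The negative binomial PMF converges pointwise to the Poisson PMF as `r → ∞` with the
mean held fixed at `μ` (via `p = r/(r+μ)`). -/
theorem negBinomial_tendsto_poisson (μ : ℝ) (hμ : 0 < μ) (x : ℕ) :
    Tendsto
      (fun r : ℝ ↦
        Real.Gamma (r + x) / (Real.Gamma r * Real.Gamma ((x : ℝ) + 1)) *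
          (r / (r + μ)) ^ r * (1 - r / (r + μ)) ^ x)
      atTop (𝓝 (μ ^ x * Real.exp (-μ) / x !)) :=
  negBinomial_tendsto_poisson_general μ x
end

section
/- For the pairwise Poisson graphical model with unnormalized mass h(x) = exp(θᵀx + xᵀΦx − Σ_i log(x_i!)) on ℤ₊^d (where Φ has zero diagonal), if some off-diagonal entry φ_ij > 0 then the normalizing sum Σ_{x ∈ ℤ₊^d} h(x) diverges; i.e., normalizability requires φ_ij ≤ 0 for all i ≠ j. -/
open scoped Nat
open Real
open scoped ENNReal

/-! Put mass only on the coordinates `i` and `j`, both equal to `n`. The mass there is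
`exp ((θ i + θ j) n + 2 φᵢⱼ n²) / (n!)²`, and `(n!)² ≤ exp (2 n log n)`, so the quadratic term
wins: infinitely many terms of the normalizing sum are at least `1`. -/

open Filter Function

theorem ENNReal.tsum_eq_top_of_injective_of_eventually_one_le {α : Type*} {f : α → ℝ≥0∞}
    {e : ℕ → α} (he : Injective e) (h : ∀ᶠ n in atTop, 1 ≤ f (e n)) : ∑' x, f x = ⊤ := by
  refine top_unique (le_trans ?_ (ENNReal.tsum_comp_le_tsum_of_injective he f))
  by_contra hfin
  have hzero := ENNReal.tendsto_atTop_zero_of_tsum_ne_top (top_le_iff.not.mp hfin)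
  obtain ⟨n, hone, hsmall⟩ := (h.and (hzero.eventually (gt_mem_nhds zero_lt_one))).exists
  exact hone.not_gt hsmall

theorem Real.tendsto_mul_add_sub_mul_log_atTop {c : ℝ} (hc : 0 < c) (a b : ℝ) :
    Tendsto (fun x : ℝ => c * x + b - a * log x) atTop atTop := by
  have hlog : Tendsto (fun x : ℝ => log x / x) atTop (nhds 0) :=
    isLittleO_log_id_atTop.tendsto_div_nhds_zero
  have hb : Tendsto (fun x : ℝ => b / x) atTop (nhds 0) :=
    tendsto_const_nhds.div_atTop tendsto_id
  have hslope : Tendsto (fun x : ℝ => c + b / x - a * (log x / x)) atTop (nhds c) := by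
    simpa using (tendsto_const_nhds.add hb).sub (hlog.const_mul a)
  refine (tendsto_id.atTop_mul_pos hc hslope).congr' ?_
  filter_upwards [eventually_gt_atTop 0] with x hx
  simp only [id]
  field_simp

theorem Nat.factorial_le_exp_mul_log (n : ℕ) : (n ! : ℝ) ≤ exp (n * Real.log n) := by
  have hpos : (0 : ℝ) < n ! := by positivity
  rw [← Real.log_pow, ← Real.exp_log hpos]
  gcongr
  exact_mod_cast Nat.factorial_le_pow n

theorem tendsto_exp_add_mul_sq_div_factorial_sq_atTop (b : ℝ) {c : ℝ} (hc : 0 < c) :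
    Tendsto (fun n : ℕ => exp (b * n + c * n ^ 2) / (n ! : ℝ) ^ 2) atTop atTop := by
  have hexponent : Tendsto (fun n : ℕ => (n : ℝ) * (c * n + b - 2 * log n)) atTop atTop :=
    tendsto_natCast_atTop_atTop.atTop_mul_atTop₀
      ((tendsto_mul_add_sub_mul_log_atTop hc 2 b).comp tendsto_natCast_atTop_atTop)
  refine tendsto_atTop_mono (fun n => ?_) (tendsto_exp_atTop.comp hexponent)
  calc exp (n * (c * n + b - 2 * log n))
      = exp (b * n + c * n ^ 2) / exp (n * log n) ^ 2 := by
        rw [← exp_nat_mul, ← exp_sub]; ring_nf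
    _ ≤ exp (b * n + c * n ^ 2) / (n ! : ℝ) ^ 2 := by
        gcongr
        exact Nat.factorial_le_exp_mul_log n

section PairVec

variable {ι : Type*} [DecidableEq ι] {i j : ι}

def pairVec (i j : ι) (n : ℕ) : ι → ℕ := fun k => if k = i ∨ k = j then n else 0

@[simp] theorem pairVec_left (n : ℕ) : pairVec i j n i = n := by simp [pairVec]

@[simp] theorem pairVec_right (n : ℕ) : pairVec i j n j = n := by simp [pairVec]

theorem pairVec_of_ne {k : ι} (hk : k ≠ i ∧ k ≠ j) (n : ℕ) : pairVec i j n k = 0 := by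
  simp [pairVec, hk.1, hk.2]

theorem pairVec_injective : Injective (pairVec i j) := fun m n hmn => by
  simpa using congrFun hmn i

variable [Fintype ι]

theorem sum_mul_pairVec (hij : i ≠ j) (θ : ι → ℝ) (n : ℕ) :
    ∑ k, θ k * (pairVec i j n k : ℝ) = (θ i + θ j) * n := by
  rw [Fintype.sum_eq_add i j hij fun k hk => by simp [pairVec_of_ne hk]]
  simp only [pairVec_left, pairVec_right]
  ring

theorem sum_sum_mul_pairVec (hij : i ≠ j) (Φ : ι → ι → ℝ) (n : ℕ) :
    ∑ k, ∑ l, (pairVec i j n k : ℝ) * Φ k l * (pairVec i j n l : ℝ) =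
      (Φ i i + Φ i j + Φ j i + Φ j j) * n ^ 2 := by
  simp_rw [mul_assoc, ← Finset.mul_sum, sum_mul_pairVec hij, mul_comm (pairVec i j n _ : ℝ)]
  rw [sum_mul_pairVec hij (fun k => (Φ k i + Φ k j) * n)]
  ring

theorem prod_factorial_pairVec (hij : i ≠ j) (n : ℕ) :
    ∏ k, ((pairVec i j n k)! : ℝ) = (n ! : ℝ) ^ 2 := by
  rw [Fintype.prod_eq_mul i j hij fun k hk => by simp [pairVec_of_ne hk]]
  simp [sq]

end PairVec

/-- The pairwise Poisson graphical model is not normalizable with any positive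
off-diagonal interaction: if `Φ i j > 0` for some `i ≠ j` then the normalizing sum
diverges. -/
theorem pgm_not_normalizable_of_pos {d : ℕ} (θ : Fin d → ℝ) (Φ : Fin d → Fin d → ℝ)
    (hsym : ∀ i j, Φ i j = Φ j i) (hdiag : ∀ i, Φ i i = 0)
    (i j : Fin d) (hij : i ≠ j) (hpos : 0 < Φ i j) :
    ∑' x : Fin d → ℕ,
        ENNReal.ofReal
          (Real.exp ((∑ k, θ k * (x k : ℝ)) + ∑ k, ∑ l, (x k : ℝ) * Φ k l * (x l : ℝ)) /
            ∏ k, ((x k)! : ℝ)) = ⊤ := by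
  refine ENNReal.tsum_eq_top_of_injective_of_eventually_one_le
    (pairVec_injective (i := i) (j := j)) ?_
  have hc : 0 < Φ i i + Φ i j + Φ j i + Φ j j := by linarith [hdiag i, hdiag j, hsym i j]
  filter_upwards [(tendsto_exp_add_mul_sq_div_factorial_sq_atTop _ hc).eventually_ge_atTop 1]
    with n hn
  rw [sum_mul_pairVec hij, sum_sum_mul_pairVec hij, prod_factorial_pairVec hij]
  exact ENNReal.one_le_ofReal.mpr hn
end

section
/- For the two-dimensional case with unnormalized mass h(x,y) = exp(θ1 x + θ2 y + 2φ x y)/(x! y!) on ℤ₊², the sum Σ_{x,y ≥ 0} h(x,y) is finite if φ ≤ 0 and infinite if φ > 0. -/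
open scoped Nat
open Real
open scoped ENNReal

/-!
For `φ ≤ 0` the interaction factor `exp (2 φ x y)` is at most `1`, so the mass is dominated by a
product of two Poisson masses, each with finite total `exp (exp θ)`. For `φ > 0` already the
diagonal terms are eventually `≥ 1`: since `(n !)² ≤ (n²)ⁿ`, it suffices that
`n² ≤ exp (θ1 + θ2 + 2 φ n)` for large `n`.
-/

open Filter

theorem ENNReal.tsum_eq_top_of_frequently_le {α : Type*} {f : α → ℝ≥0∞} {ε : ℝ≥0∞} (hε : ε ≠ 0)
    (h : ∃ᶠ a in cofinite, ε ≤ f a) : ∑' a, f a = ⊤ := by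
  by_contra hf
  have hsmall : ∀ᶠ a in cofinite, f a < ε :=
    (ENNReal.tendsto_cofinite_zero_of_tsum_ne_top hf).eventually (gt_mem_nhds hε.bot_lt)
  exact h (hsmall.mono fun _ ha => not_le.2 ha)

theorem ENNReal.tsum_tsum_lt_top_of_le_mul {α β : Type*} {f : α → β → ℝ≥0∞} {g : α → ℝ≥0∞}
    {h : β → ℝ≥0∞} (hf : ∀ a b, f a b ≤ g a * h b) (hg : ∑' a, g a < ⊤) (hh : ∑' b, h b < ⊤) :
    ∑' a, ∑' b, f a b < ⊤ :=
  calc ∑' a, ∑' b, f a b ≤ ∑' a, ∑' b, g a * h b :=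
        ENNReal.tsum_le_tsum fun a => ENNReal.tsum_le_tsum fun b => hf a b
    _ = (∑' a, g a) * ∑' b, h b := by simp_rw [ENNReal.tsum_mul_left, ENNReal.tsum_mul_right]
    _ < ⊤ := ENNReal.mul_lt_top hg hh

theorem tsum_ofReal_exp_mul_div_factorial_lt_top (θ : ℝ) :
    ∑' n : ℕ, ENNReal.ofReal (exp (θ * n) / n !) < ⊤ := by
  simp_rw [mul_comm θ, Real.exp_nat_mul]
  rw [← ENNReal.ofReal_tsum_of_nonneg (fun n => by positivity)
    (Real.summable_pow_div_factorial (exp θ))]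
  exact ENNReal.ofReal_lt_top

theorem exp_add_mul_div_factorial_le_of_nonpos {phi : ℝ} (hphi : phi ≤ 0) (θ1 θ2 : ℝ) (x y : ℕ) :
    exp (θ1 * x + θ2 * y + 2 * phi * x * y) / (x ! * y !) ≤
      exp (θ1 * x) / x ! * (exp (θ2 * y) / y !) := by
  rw [div_mul_div_comm, ← Real.exp_add]
  refine div_le_div_of_nonneg_right (exp_le_exp.2 ?_) (by positivity)
  have : 0 ≤ -phi * x * y :=
    mul_nonneg (mul_nonneg (neg_nonneg.2 hphi) x.cast_nonneg) y.cast_nonneg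
  linarith

theorem factorial_mul_factorial_le_sq_pow (n : ℕ) : (n ! : ℝ) * n ! ≤ ((n : ℝ) ^ 2) ^ n := by
  have h : (n ! : ℝ) ≤ (n : ℝ) ^ n := by exact_mod_cast Nat.factorial_le_pow n
  calc (n ! : ℝ) * n ! ≤ (n : ℝ) ^ n * (n : ℝ) ^ n := mul_le_mul h h (by positivity) (by positivity)
    _ = ((n : ℝ) ^ 2) ^ n := by ring

theorem eventually_sq_le_exp_add_mul (c : ℝ) {b : ℝ} (hb : 0 < b) :
    ∀ᶠ x : ℝ in atTop, x ^ 2 ≤ exp (c + b * x) := by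
  filter_upwards [(isLittleO_pow_exp_pos_mul_atTop 2 hb).def (exp_pos c)] with x hx
  rw [exp_add]
  simpa only [norm_pow, Real.norm_eq_abs, sq_abs, abs_of_pos (exp_pos _)] using hx

theorem eventually_one_le_exp_mul_add_mul_div_factorial (c : ℝ) {phi : ℝ} (hphi : 0 < phi) :
    ∀ᶠ n : ℕ in atTop, 1 ≤ exp (c * n + 2 * phi * n * n) / (n ! * n !) := by
  filter_upwards [tendsto_natCast_atTop_atTop.eventually
    (eventually_sq_le_exp_add_mul c (by positivity : 0 < 2 * phi))] with n hn
  rw [one_le_div (by positivity)]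
  calc (n ! : ℝ) * n ! ≤ ((n : ℝ) ^ 2) ^ n := factorial_mul_factorial_le_sq_pow n
    _ ≤ exp (c + 2 * phi * n) ^ n := pow_le_pow_left₀ (by positivity) hn n
    _ = exp (c * n + 2 * phi * n * n) := by rw [← Real.exp_nat_mul]; ring_nf

/-- For the two-dimensional Poisson graphical model with unnormalized mass
`exp(θ1 x + θ2 y + 2phixy)/(x! y!)`, the normalizing sum is finite iff `phi ≤ 0`:
it is finite when `phi ≤ 0` and infinite when `phi > 0`. -/
theorem pgm_two_dim_normalizable_iff (θ1 θ2 phi : ℝ) :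
    (phi ≤ 0 →
      ∑' x : ℕ, ∑' y : ℕ,
        ENNReal.ofReal
          (Real.exp (θ1 * x + θ2 * y + 2 * phi * x * y) / ((x ! : ℝ) * (y ! : ℝ))) < ⊤) ∧
    (0 < phi →
      ∑' x : ℕ, ∑' y : ℕ,
        ENNReal.ofReal
          (Real.exp (θ1 * x + θ2 * y + 2 * phi * x * y) / ((x ! : ℝ) * (y ! : ℝ))) = ⊤) := by
  refine ⟨fun hphi => ?_, fun hphi => ?_⟩
  · refine ENNReal.tsum_tsum_lt_top_of_le_mul (fun x y => ?_)
      (tsum_ofReal_exp_mul_div_factorial_lt_top θ1) (tsum_ofReal_exp_mul_div_factorial_lt_top θ2)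
    rw [← ENNReal.ofReal_mul (by positivity)]
    exact ENNReal.ofReal_le_ofReal (exp_add_mul_div_factorial_le_of_nonpos hphi θ1 θ2 x y)
  · have hdiag : ∃ᶠ n : ℕ in cofinite,
        1 ≤ ENNReal.ofReal (exp (θ1 * n + θ2 * n + 2 * phi * n * n) / (n ! * n !)) := by
      rw [Nat.cofinite_eq_atTop]
      refine ((eventually_one_le_exp_mul_add_mul_div_factorial (θ1 + θ2) hphi).mono
        fun n hn => ?_).frequently
      simpa only [ENNReal.one_le_ofReal, add_mul] using hn
    exact top_le_iff.1 <| (ENNReal.tsum_eq_top_of_frequently_le one_ne_zero hdiag).ge.trans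
      (ENNReal.tsum_le_tsum fun x => ENNReal.le_tsum x)
end

section
/- The univariate exponential family with square-root sufficient statistic and Poisson base measure is normalizable for all parameters: for all η1, η2 ∈ ℝ, Σ_{x=0}^∞ exp(η1 x + η2 √x − log(x!)) < ∞. -/
open scoped Nat
open Real
open scoped ENNReal

/-!
Since `√x ≤ 1 + x`, the exponent `η1 x + η2 √x` is bounded by an affine function `a + b x`,
so the terms are dominated by `exp a * (exp b)^x / x!`, the terms of a convergent
exponential series.
-/

lemma summable_exp_div_factorial_of_le_linear {f : ℕ → ℝ} (a b : ℝ)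
    (hf : ∀ n : ℕ, f n ≤ a + b * n) :
    Summable fun n : ℕ => exp (f n) / n ! := by
  refine Summable.of_nonneg_of_le (fun n => by positivity) (fun n => ?_)
    ((summable_pow_div_factorial (exp b)).mul_left (exp a))
  calc exp (f n) / n ! ≤ exp (a + b * n) / n ! := by gcongr; exact hf n
    _ = exp a * (exp b ^ n / n !) := by
      rw [exp_add, mul_comm b, exp_nat_mul, mul_div_assoc]

lemma sqrt_le_one_add {x : ℝ} (hx : 0 ≤ x) : √x ≤ 1 + x :=
  (sqrt_le_left (by linarith)).mpr (by nlinarith)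

lemma mul_sqrt_le_abs_add_abs_mul {x : ℝ} (c : ℝ) (hx : 0 ≤ x) : c * √x ≤ |c| + |c| * x :=
  calc c * √x ≤ |c| * √x := mul_le_mul_of_nonneg_right (le_abs_self c) (sqrt_nonneg x)
    _ ≤ |c| * (1 + x) := mul_le_mul_of_nonneg_left (sqrt_le_one_add hx) (abs_nonneg c)
    _ = |c| + |c| * x := by ring

/-- The univariate exponential family with square-root sufficient statistic and Poisson
base measure is normalizable for all parameters. -/
theorem sqr_family_normalizable (η1 η2 : ℝ) :
    ∑' x : ℕ,
        ENNReal.ofReal (Real.exp (η1 * x + η2 * Real.sqrt x) / (x ! : ℝ)) < ⊤ := by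
  refine Summable.tsum_ofReal_lt_top (summable_exp_div_factorial_of_le_linear |η2| (η1 + |η2|)
    fun n => ?_)
  linarith [mul_sqrt_le_abs_add_abs_mul η2 (Nat.cast_nonneg (α := ℝ) n)]
end

section
/- The distributional transform of a random variable is uniformly distributed: if X is any real random variable with CDF F, V ~ Uniform(0,1) independent of X, and U = F(X−) + V·P(X = x evaluated at X) (i.e., U = P(X < X) + V·P(X = X) using the left limit of F at X), then U ~ Uniform(0,1). -/
open MeasureTheory ProbabilityTheory
open scoped ENNReal

/-!
Let `F` be the CDF of `X` and, for `0 < u < 1`, let `q` be the `u`-quantile, so that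
`F x < u ↔ x < q`. Then `U ≤ u` holds whenever `X < q`; for `X > q` it forces `F X = F q`,
which happens only on a null set; and on the atom `{X = q}` it is the event
`V ≤ t` with `F(q−) + t (F q − F(q−)) = u`. By independence,
`P(U ≤ u) = F(q−) + (F q − F(q−)) t = u`. The endpoints `u = 0, 1` follow by monotonicity.
-/

open Set Filter Topology Function

lemma eqOn_Icc_of_monotone_of_eqOn_Ioo {g : ℝ → ℝ} (hg : Monotone g) (h0 : 0 ≤ g 0)
    (h1 : g 1 ≤ 1) (h : EqOn g id (Ioo 0 1)) : EqOn g id (Icc 0 1) := by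
  rintro u ⟨hu0, hu1⟩
  rcases hu0.eq_or_lt with rfl | hu0
  · have hid : Tendsto id (𝓝[>] (0 : ℝ)) (𝓝 0) := tendsto_id.mono_left nhdsWithin_le_nhds
    refine h0.antisymm' (ge_of_tendsto hid ?_)
    filter_upwards [Ioo_mem_nhdsGT zero_lt_one] with x hx
    exact (hg hx.1.le).trans_eq (h hx)
  rcases hu1.eq_or_lt with rfl | hu1
  · have hid : Tendsto id (𝓝[<] (1 : ℝ)) (𝓝 1) := tendsto_id.mono_left nhdsWithin_le_nhds
    refine h1.antisymm (le_of_tendsto hid ?_)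
    filter_upwards [Ioo_mem_nhdsLT zero_lt_one] with x hx
    exact (h hx).symm.trans_le (hg hx.2.le)
  · exact h ⟨hu0, hu1⟩

lemma measure_eq_zero_of_forall_measure_inter_Iic_eq_zero {μ : Measure ℝ} {s : Set ℝ}
    (h : ∀ x ∈ s, μ (s ∩ Iic x) = 0) : μ s = 0 := by
  have hmax : μ (s ∩ upperBounds s) = 0 := by
    rcases (s ∩ upperBounds s).eq_empty_or_nonempty with hempty | ⟨y, hys, hy⟩
    · rw [hempty, measure_empty]
    · refine measure_mono_null (fun z hz => ?_) (h y hys)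
      exact ⟨hz.1, hy hz.1⟩
  have hbelow (r : ℚ) : μ (s ∩ Iic (r : ℝ) ∩ {_y | ∃ x ∈ s, (r : ℝ) ≤ x}) = 0 := by
    by_cases hr : ∃ x ∈ s, (r : ℝ) ≤ x
    · obtain ⟨x, hxs, hrx⟩ := hr
      refine measure_mono_null (fun y hy => ?_) (h x hxs)
      exact ⟨hy.1.1, mem_Iic.2 (hy.1.2.trans hrx)⟩
    · simp [hr]
  -- A point of `s` that is not its maximum lies below a rational that lies below a point of `s`.
  refine measure_mono_null (fun y hys => ?_)
    (measure_union_null hmax (measure_iUnion_null hbelow))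
  by_cases hy : y ∈ upperBounds s
  · exact Or.inl ⟨hys, hy⟩
  · obtain ⟨x, hxs, hyx⟩ : ∃ x ∈ s, y < x := by simpa [mem_upperBounds] using hy
    obtain ⟨r, hyr, hrx⟩ := exists_rat_btwn hyx
    exact Or.inr (mem_iUnion.2 ⟨r, ⟨hys, hyr.le⟩, x, hxs, hrx.le⟩)

lemma StieltjesFunction.exists_forall_lt_iff_lt (f : StieltjesFunction ℝ) {u : ℝ}
    (hlo : ∃ x, f x < u) (hhi : ∃ x, u ≤ f x) : ∃ q, ∀ x, f x < u ↔ x < q := by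
  obtain ⟨x₀, hx₀⟩ := hlo
  set S := {x | u ≤ f x}
  have hbdd : BddBelow S := ⟨x₀, fun y hy => le_of_not_gt fun hyx =>
    (hy.trans (f.mono hyx.le)).not_gt hx₀⟩
  have hfq : u ≤ f (sInf S) := by
    refine ge_of_tendsto ((f.right_continuous _).tendsto.mono_left
      (nhdsWithin_mono _ Ioi_subset_Ici_self)) (eventually_nhdsWithin_of_forall fun x hx => ?_)
    obtain ⟨s, hs, hsx⟩ := exists_lt_of_csInf_lt hhi hx
    exact le_trans hs (f.mono hsx.le)
  refine ⟨sInf S, fun x => ⟨fun hx => lt_of_not_ge fun hqx => ?_, fun hx => ?_⟩⟩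
  · exact (hfq.trans (f.mono hqx)).not_gt hx
  · exact lt_of_not_ge fun hux => (csInf_le hbdd hux).not_gt hx

lemma ProbabilityTheory.leftLim_cdf (ν : Measure ℝ) [IsProbabilityMeasure ν] (x : ℝ) :
    leftLim (cdf ν) x = ν.real (Iio x) := by
  have h := (cdf ν).measure_Iio (tendsto_cdf_atBot ν) x
  rw [measure_cdf, sub_zero] at h
  rw [measureReal_def, h, ENNReal.toReal_ofReal]
  exact (cdf_nonneg ν (x - 1)).trans ((cdf ν).mono.le_leftLim (sub_one_lt x))

lemma ProbabilityTheory.ae_cdf_lt_of_lt (ν : Measure ℝ) [IsProbabilityMeasure ν] (q : ℝ) :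
    ∀ᵐ x ∂ν, q < x → cdf ν q < cdf ν x := by
  simp only [ae_iff, Classical.not_imp, not_lt]
  refine measure_eq_zero_of_forall_measure_inter_Iic_eq_zero fun x hx => ?_
  have hIoc := (cdf ν).measure_Ioc q x
  rw [measure_cdf, ENNReal.ofReal_eq_zero.mpr (sub_nonpos.mpr hx.2)] at hIoc
  refine measure_mono_null (fun y hy => ?_) hIoc
  exact ⟨hy.1.1, hy.2⟩

lemma ofReal_sub_mul_volume_setOf_add_mul_sub_le {a b u : ℝ} (hau : a ≤ u) (hub : u ≤ b) :
    ENNReal.ofReal (b - a) * volume ({v | a + v * (b - a) ≤ u} ∩ Ioo 0 1) =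
      ENNReal.ofReal (u - a) := by
  rcases (hau.trans hub).eq_or_lt with rfl | hab
  · simp [le_antisymm hub hau]
  set t := (u - a) / (b - a)
  have hset : {v | a + v * (b - a) ≤ u} = Iic t := by
    ext v
    simp only [mem_ofPred_eq, mem_Iic, t, le_div_iff₀ (sub_pos.mpr hab)]
    constructor <;> intro h <;> linarith
  have ht1 : t ≤ 1 := (div_le_one (sub_pos.mpr hab)).mpr (by linarith)
  have hvol : volume (Iic t ∩ Ioo 0 1) = ENNReal.ofReal t := by
    refine le_antisymm ?_ ?_
    · calc volume (Iic t ∩ Ioo 0 1) ≤ volume (Icc 0 t) :=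
            measure_mono fun v hv => ⟨hv.2.1.le, hv.1⟩
        _ = ENNReal.ofReal t := by rw [Real.volume_Icc, sub_zero]
    · calc ENNReal.ofReal t = volume (Ioo 0 t) := by rw [Real.volume_Ioo, sub_zero]
        _ ≤ volume (Iic t ∩ Ioo 0 1) :=
            measure_mono fun v hv => ⟨hv.2.le, hv.1, hv.2.trans_le ht1⟩
  rw [hset, hvol, ← ENNReal.ofReal_mul (sub_pos.mpr hab).le,
    mul_div_cancel₀ _ (sub_pos.mpr hab).ne']

noncomputable def distTransform (F : ℝ → ℝ) (x v : ℝ) : ℝ :=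
  leftLim F x + v * (F x - leftLim F x)

lemma distTransform_le_iff {F : ℝ → ℝ} (hF : Monotone F) {u q x v : ℝ}
    (hq : ∀ y, F y < u ↔ y < q) (hv : v ∈ Ioo 0 1) (hx : q < x → F q < F x) :
    distTransform F x v ≤ u ↔ x < q ∨ x = q ∧ distTransform F q v ≤ u := by
  have hjump : leftLim F x ≤ F x := hF.leftLim_le le_rfl
  rcases lt_trichotomy x q with hxq | rfl | hqx
  · have hFx := (hq x).2 hxq
    simp only [distTransform, hxq, true_or, iff_true]
    nlinarith [hv.2]
  · simp
  · have hFq : u ≤ F q := not_lt.1 fun h => lt_irrefl q ((hq q).1 h)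
    have hleft : F q ≤ leftLim F x := hF.le_leftLim hqx
    simp only [distTransform, hqx.not_gt, hqx.ne', false_or, false_and, iff_false, not_le]
    -- `(1 - v) F(x−) + v F(x)` with `F(x−) ≥ F q ≥ u` and `F x > F q`
    nlinarith [hv.1, hv.2, hx hqx]

lemma measure_distTransform_cdf_le {Ω : Type*} [MeasurableSpace Ω] {P : Measure Ω}
    [IsProbabilityMeasure P] {X V : Ω → ℝ} (hX : Measurable X) (hV : Measurable V)
    (hindep : IndepFun X V P) (hunif : P.map V = volume.restrict (Ioo 0 1)) {u : ℝ}
    (hu : u ∈ Ioo 0 1) :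
    P {ω | distTransform (cdf (P.map X)) (X ω) (V ω) ≤ u} = ENNReal.ofReal u := by
  have : IsProbabilityMeasure (P.map X) := Measure.isProbabilityMeasure_map hX.aemeasurable
  set F := cdf (P.map X)
  obtain ⟨q, hq⟩ := F.exists_forall_lt_iff_lt
    ((tendsto_cdf_atBot _).eventually_lt_const hu.1).exists
    (((tendsto_cdf_atTop _).eventually_const_lt hu.2).mono fun _ => le_of_lt).exists
  have hFq : u ≤ F q := not_lt.1 fun h => lt_irrefl q ((hq q).1 h)
  have hleft : leftLim F q ≤ u :=
    le_of_tendsto (F.mono.tendsto_leftLim q)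
      (eventually_nhdsWithin_of_forall fun x hx => ((hq x).2 hx).le)
  set S := {v | distTransform F q v ≤ u}
  have hS : MeasurableSet S :=
    measurableSet_le (by unfold distTransform; fun_prop) measurable_const
  have hae : {ω | distTransform F (X ω) (V ω) ≤ u} =ᵐ[P]
      (X ⁻¹' Iio q ∪ (X ⁻¹' {q} ∩ V ⁻¹' S) : Set Ω) := by
    filter_upwards [ae_of_ae_map hX.aemeasurable (ae_cdf_lt_of_lt _ q),
      ae_of_ae_map hV.aemeasurable (hunif ▸ ae_restrict_mem measurableSet_Ioo)] with ω hx hv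
    exact propext (distTransform_le_iff F.mono hq hv hx)
  have hdisj : Disjoint (X ⁻¹' Iio q) (X ⁻¹' {q} ∩ V ⁻¹' S) :=
    disjoint_left.2 fun ω h1 h2 => h1.ne h2.1
  have hbelow : P (X ⁻¹' Iio q) = ENNReal.ofReal (leftLim F q) := by
    rw [← Measure.map_apply hX measurableSet_Iio, ← measure_cdf (P.map X),
      F.measure_Iio (tendsto_cdf_atBot _), sub_zero]
  have hatom : P (X ⁻¹' {q}) = ENNReal.ofReal (F q - leftLim F q) := by
    rw [← Measure.map_apply hX (measurableSet_singleton q), ← measure_cdf (P.map X),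
      F.measure_singleton]
  have hVS : P (V ⁻¹' S) =
      volume ({v | leftLim F q + v * (F q - leftLim F q) ≤ u} ∩ Ioo 0 1) := by
    rw [← Measure.map_apply hV hS, hunif, Measure.restrict_apply hS]
    rfl
  rw [measure_congr hae, measure_union hdisj ((hX (measurableSet_singleton q)).inter (hV hS)),
    hindep.measure_inter_preimage_eq_mul _ _ (measurableSet_singleton q) hS, hbelow, hatom, hVS,
    ofReal_sub_mul_volume_setOf_add_mul_sub_le hleft hFq,
    ← ENNReal.ofReal_add (by rw [leftLim_cdf]; exact measureReal_nonneg) (sub_nonneg.2 hleft),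
    add_sub_cancel]

/-- The distributional transform of a random variable is uniformly distributed: if `X` is
any real random variable, `V ~ Uniform(0,1)` independent of `X`, and
`U = F(X−) + V·(F(X) − F(X−))`, then `P(U ≤ u) = u` for all `u ∈ [0,1]`. -/
theorem distributional_transform_uniform {Ω : Type*} [MeasureSpace Ω]
    [IsProbabilityMeasure (ℙ : Measure Ω)]
    (X V : Ω → ℝ) (hX : Measurable X) (hV : Measurable V)
    (hindep : IndepFun X V ℙ)
    (hunif : Measure.map V ℙ = volume.restrict (Set.Ioo (0 : ℝ) 1)) :
    ∀ u ∈ Set.Icc (0 : ℝ) 1,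
      (ℙ {ω | (ℙ {ω' | X ω' < X ω}).toReal +
          V ω * ((ℙ {ω' | X ω' ≤ X ω}).toReal - (ℙ {ω' | X ω' < X ω}).toReal) ≤ u}).toReal
        = u := by
  have : IsProbabilityMeasure (Measure.map X ℙ) :=
    Measure.isProbabilityMeasure_map hX.aemeasurable
  have hle (x : ℝ) : (ℙ {ω' | X ω' ≤ x}).toReal = cdf (Measure.map X ℙ) x := by
    rw [cdf_eq_real, measureReal_def, Measure.map_apply hX measurableSet_Iic]; rfl
  have hlt (x : ℝ) : (ℙ {ω' | X ω' < x}).toReal = leftLim (cdf (Measure.map X ℙ)) x := by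
    rw [leftLim_cdf, measureReal_def, Measure.map_apply hX measurableSet_Iio]; rfl
  simp only [hle, hlt]
  refine eqOn_Icc_of_monotone_of_eqOn_Ioo
    (g := fun u => (ℙ : Measure Ω).real
      {ω | distTransform (cdf (Measure.map X ℙ)) (X ω) (V ω) ≤ u})
    (fun u u' huu' => measureReal_mono fun ω (hω : _ ≤ u) => hω.trans huu') measureReal_nonneg
    measureReal_le_one fun u hu => ?_
  dsimp only
  rw [id, measureReal_def, measure_distTransform_cdf_le hX hV hindep hunif hu,
    ENNReal.toReal_ofReal hu.1.le]
end
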